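/- (Gabriel's main property) Let A be an abelian length category with Gabriel-Roiter measure μ. If X is indecomposable and X ⊆ Y = Y_1 ⊕ ... ⊕ Y_r with all Y_i indecomposable, then μ(X) ≤ max_i μ(Y_i); moreover if μ(X) = max_i μ(Y_i), then X is a direct summand of Y. -/

import Mathlib

open CategoryTheory CategoryTheory.Limits

/-- The lexicographic order on finite subsets of ℕ:
`X ≤ Y` iff `min (Y \ X) ≤ min (X \ Y)`, with `min ∅ = ⊤`. -/
def lexLE (X Y : Finset ℕ) : Prop :=
  (Y \ X).min ≤ (X \ Y).min

/-- Strict lexicographic order. -/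
def lexLT (X Y : Finset ℕ) : Prop :=
  lexLE X Y ∧ ¬ lexLE Y X

variable {C : Type*} [Category C] [Abelian C]

/-- `n` is the composition length of the object `X`: there is a maximal
strictly increasing chain of subobjects of `X` from `⊥` to `⊤` with `n`
steps, and every strictly increasing chain of subobjects has at most
`n` steps. -/
def ObjLength (X : C) (n : ℕ) : Prop :=
  (∃ f : Fin (n + 1) → Subobject X, StrictMono f ∧ f 0 = ⊥ ∧ f (Fin.last n) = ⊤) ∧
  ∀ (m : ℕ) (f : Fin (m + 1) → Subobject X), StrictMono f → m ≤ n

/-- `A` is the set of lengths of a finite chain of indecomposable subobjects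
of `X` ending in `X` itself. -/
def IsGRChainVal (len : C → ℕ) (X : C) (A : Finset ℕ) : Prop :=
  ∃ s : Finset (Subobject X),
    IsChain (· ≤ ·) (s : Set (Subobject X)) ∧
    (⊤ : Subobject X) ∈ s ∧
    (∀ t ∈ s, Indecomposable ((t : Subobject X) : C)) ∧
    s.image (fun t : Subobject X => len ((t : Subobject X) : C)) = A

/-- `mu` is the Gabriel-Roiter measure associated to the length function
`len`: for each indecomposable `X`, `mu X` is the lexicographic maximum of
the sets of lengths along chains of indecomposable subobjects of `X`. -/
def IsGRMeasure (len : C → ℕ) (mu : C → Finset ℕ) : Prop :=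
  ∀ X : C, Indecomposable X →
    IsGRChainVal len X (mu X) ∧
    ∀ A : Finset ℕ, IsGRChainVal len X A → lexLE A (mu X)

/-- `X` is a Gabriel-Roiter predecessor of `Y`: both are indecomposable,
`X` is a proper subobject of `Y`, and `mu X` attains the maximum of the
Gabriel-Roiter measures of the proper indecomposable subobjects of `Y`. -/
def IsGRPred (mu : C → Finset ℕ) (X Y : C) : Prop :=
  Indecomposable X ∧ Indecomposable Y ∧
  (∃ f : X ⟶ Y, Mono f ∧ ¬ IsIso f) ∧
  ∀ t : Subobject Y, t ≠ ⊤ → Indecomposable ((t : Subobject Y) : C) →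
    lexLE (mu ((t : Subobject Y) : C)) (mu X)

instance : HasFiniteBiproducts C := HasFiniteBiproducts.of_hasFiniteProducts

/-!
We work with the axioms (GR1)–(GR3) of `μ = ℓ*`, comparing values of `μ` in a linear order.
By induction on `ℓ X` one shows: if `X` embeds into a finite direct sum of indecomposables of
measure `≤ v` and `v ≤ μ X`, then some component `X ⟶ Yᵢ` is mono; (GR1) and (GR2) then force it
to be an isomorphism, so `X` is a direct summand. If no component were mono, `X` would embed into
the sum of the images of the components. These are shorter than `X`, so by induction their
indecomposable summands `M` satisfy `μ M ≤ v`, hence `μ M < μ X` by (GR2). For `M` of largest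
measure, (GR3) gives a proper indecomposable `X' ⊂ X` with `μ M ≤ μ X'`; by induction `X'` is a
direct summand of that sum, hence of `X`, which is impossible.
-/

section LexOrder

open Finset Finset.Colex OrderDual

/-- `lexLE` is the colexicographic order for the reversed order on `ℕ`: the smallest element of
the symmetric difference decides. Through this key it inherits Mathlib's linear order on
`Colex`. -/
def lexKey (A : Finset ℕ) : Colex (Finset ℕᵒᵈ) :=
  toColex (A.map toDual.toEmbedding)

theorem lexKey_injective : Function.Injective lexKey :=
  fun _ _ h => map_injective _ (toColex_inj.1 h)

theorem lexKey_le_lexKey {A B : Finset ℕ} :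
    lexKey A ≤ lexKey B ↔ ∀ a ∈ A, a ∉ B → ∃ b ∈ B, b ∉ A ∧ b ≤ a := by
  simp [lexKey, toColex_le_toColex, OrderDual.forall, OrderDual.exists]

theorem lexKey_lt_lexKey {A B : Finset ℕ} :
    lexKey A < lexKey B ↔ ∃ b ∈ B, b ∉ A ∧ ∀ a ∈ A, a ∉ B → b < a := by
  simp [lexKey, toColex_lt_toColex_iff_exists_forall_lt, OrderDual.forall, OrderDual.exists]

theorem lexLE_iff_lexKey_le {A B : Finset ℕ} : lexLE A B ↔ lexKey A ≤ lexKey B := by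
  simp only [lexLE, lexKey_le_lexKey, Finset.le_min_iff, mem_sdiff, and_imp]
  refine forall₂_congr fun a _ => forall_congr' fun _ => ⟨fun h => ?_, ?_⟩
  · obtain ⟨b, hb⟩ :=
      min_of_nonempty (s := B \ A) (nonempty_of_ne_empty fun h0 => by simp [h0] at h)
    rw [hb, WithTop.coe_le_coe] at h
    exact ⟨b, (mem_sdiff.1 (mem_of_min hb)).1, (mem_sdiff.1 (mem_of_min hb)).2, h⟩
  · rintro ⟨b, hbB, hbA, hba⟩
    exact (min_le (mem_sdiff.2 ⟨hbB, hbA⟩)).trans (WithTop.coe_le_coe.2 hba)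

theorem lexKey_le_of_subset {A B : Finset ℕ} (h : A ⊆ B) : lexKey A ≤ lexKey B :=
  lexKey_le_lexKey.2 fun _ ha haB => (haB (h ha)).elim

theorem lexKey_empty_lt {B : Finset ℕ} (hB : B.Nonempty) : lexKey ∅ < lexKey B := by
  obtain ⟨b, hb⟩ := hB
  exact lexKey_lt_lexKey.2 ⟨b, hb, notMem_empty b, by simp⟩

theorem lexKey_insert_le {A B : Finset ℕ} {c : ℕ} (hAB : lexKey A < lexKey B)
    (hA : ∀ a ∈ A, a < c) (hB : ∀ b ∈ B, b ≤ c) : lexKey (insert c A) ≤ lexKey B := by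
  obtain ⟨b, hbB, hbA, hb⟩ := lexKey_lt_lexKey.1 hAB
  refine lexKey_le_lexKey.2 fun x hx hxB => ⟨b, hbB, ?_⟩
  rcases mem_insert.1 hx with rfl | hxA
  · exact ⟨by simp [hbA, ne_of_mem_of_not_mem hbB hxB], hB b hbB⟩
  · have := hb x hxA hxB
    exact ⟨by simp [hbA, (this.trans (hA x hxA)).ne], this.le⟩

end LexOrder

theorem IsChain.exists_isGreatest {α : Type*} [PartialOrder α] {s : Finset α}
    (hs : IsChain (· ≤ ·) (s : Set α)) (hne : s.Nonempty) : ∃ t, IsGreatest (s : Set α) t := by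
  obtain ⟨t, ht⟩ := Finset.exists_maximal hne
  refine ⟨t, ht.1, fun u hu => ?_⟩
  rcases eq_or_ne u t with rfl | hne
  · exact le_rfl
  · exact (hs hu ht.1 hne).elim id (ht.2 hu)

namespace CategoryTheory.Subobject

theorem map_strictMono {D : Type*} [Category D] {P Q : D} (f : P ⟶ Q) [Mono f] :
    StrictMono (map f).obj :=
  (map f).monotone.strictMono_of_injective (map_obj_injective f)

theorem le_of_pullback_le_pullback {P Q : C} (e : P ⟶ Q) [Epi e] {s t : Subobject Q}
    (h : (Subobject.pullback e).obj s ≤ (Subobject.pullback e).obj t) : s ≤ t := by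
  have : Epi (pullbackπ e s) := Abelian.epi_fst_of_isLimit _ _ (isPullback e s).isLimit
  have := strongEpi_of_epi (pullbackπ e s)
  have sq : CommSq (ofLE _ _ h ≫ pullbackπ e t) (pullbackπ e s) t.arrow s.arrow :=
    ⟨by simp only [Category.assoc, (isPullback e t).w, (isPullback e s).w, ofLE_arrow_assoc]⟩
  exact le_of_comm sq.lift sq.fac_right

theorem pullback_strictMono {P Q : C} (e : P ⟶ Q) [Epi e] : StrictMono (Subobject.pullback e).obj :=
  (Subobject.pullback e).monotone.strictMono_of_injective fun _ _ h =>
    (le_of_pullback_le_pullback e h.le).antisymm (le_of_pullback_le_pullback e h.ge)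

theorem pullback_bot_ne_bot {P Q : C} (e : P ⟶ Q) (h : ¬Mono e) :
    (Subobject.pullback e).obj ⊥ ≠ ⊥ := by
  intro hbot
  have hker : kernelSubobject e ≤ (Subobject.pullback e).obj ⊥ :=
    le_of_comm ((isPullback e ⊥).lift 0 (kernelSubobject e).arrow (by simp)) (by simp)
  rw [hbot, le_bot_iff, kernelSubobject, mk_eq_bot_iff_zero] at hker
  exact h (Preadditive.mono_of_kernel_zero hker)

end CategoryTheory.Subobject

section Length

variable {len : C → ℕ} (hlen : ∀ Z : C, ObjLength Z (len Z))
include hlen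

theorem len_le_of_mono {P Q : C} (f : P ⟶ Q) [Mono f] : len P ≤ len Q := by
  obtain ⟨c, hc, -, -⟩ := (hlen P).1
  exact (hlen Q).2 _ _ ((Subobject.map_strictMono f).comp hc)

theorem len_eq_of_iso {P Q : C} (e : P ≅ Q) : len P = len Q :=
  (len_le_of_mono hlen e.hom).antisymm (len_le_of_mono hlen e.inv)

theorem len_lt_of_mono_of_not_isIso {P Q : C} (f : P ⟶ Q) [Mono f] (hf : ¬IsIso f) :
    len P < len Q := by
  obtain ⟨c, hc, -, htop⟩ := (hlen P).1
  have hmap := (Subobject.map_strictMono f).comp hc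
  have hlast : (Subobject.map f).obj (c (Fin.last _)) < ⊤ := by
    rw [htop, Subobject.map_top, lt_top_iff_ne_top, Ne, ← Subobject.isIso_iff_mk_eq_top]
    exact hf
  refine (hlen Q).2 _ (Fin.insertNth (Fin.last _) ⊤ ((Subobject.map f).obj ∘ c))
    ((Fin.strictMono_insertNth_iff _ _ _).2 ⟨hmap, fun i _ => ?_, fun i hi => ?_⟩)
  · exact (hmap.monotone (Fin.le_last i)).trans_lt hlast
  · exact absurd hi (Fin.castSucc_lt_last i).not_ge

theorem len_lt_of_ne_top {Q : C} {t : Subobject Q} (ht : t ≠ ⊤) : len (t : C) < len Q :=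
  len_lt_of_mono_of_not_isIso hlen t.arrow (mt (Subobject.isIso_arrow_iff_eq_top t).1 ht)

theorem isIso_of_mono_of_len_eq {P Q : C} (f : P ⟶ Q) [Mono f] (h : len P = len Q) : IsIso f :=
  not_not.1 fun hf => (len_lt_of_mono_of_not_isIso hlen f hf).ne h

theorem len_lt_of_epi_of_not_mono {P Q : C} (e : P ⟶ Q) [Epi e] (he : ¬Mono e) :
    len Q < len P := by
  obtain ⟨c, hc, hbot, -⟩ := (hlen Q).1
  have hpull := (Subobject.pullback_strictMono e).comp hc
  have hfirst : ⊥ < (Subobject.pullback e).obj (c 0) := by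
    rw [hbot]
    exact bot_lt_iff_ne_bot.2 (Subobject.pullback_bot_ne_bot e he)
  exact (hlen P).2 _ (Fin.cons ⊥ ((Subobject.pullback e).obj ∘ c))
    (Fin.strictMono_cons.2 ⟨fun j => hfirst.trans_le (hpull.monotone (Fin.zero_le j)), hpull⟩)

theorem len_image_lt_of_not_mono {P Q : C} (g : P ⟶ Q) (hg : ¬Mono g) : len (image g) < len P :=
  len_lt_of_epi_of_not_mono hlen (factorThruImage g) fun _ => hg (image.fac g ▸ mono_comp _ _)

theorem len_lt_of_iso_biprod {W Y Z : C} (e : W ≅ Y ⊞ Z) (hZ : ¬IsZero Z) : len Y < len W := by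
  refine len_lt_of_mono_of_not_isIso hlen (biprod.inl ≫ e.inv) fun h => hZ ?_
  rw [← Biprod.isIso_inl_iff_isZero, show (biprod.inl : Y ⟶ Y ⊞ Z) = (biprod.inl ≫ e.inv) ≫ e.hom
    by simp]
  infer_instance

theorem len_map_obj {A B : C} (f : A ⟶ B) [Mono f] (u : Subobject A) :
    len ((Subobject.map f).obj u : C) = len (u : C) := by
  conv_lhs => rw [← Subobject.mk_arrow u, Subobject.map_mk]
  exact len_eq_of_iso hlen (Subobject.underlyingIso _)

theorem len_top (B : C) : len ((⊤ : Subobject B) : C) = len B :=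
  len_eq_of_iso hlen (asIso (⊤ : Subobject B).arrow)

end Length

theorem CategoryTheory.Indecomposable.of_iso {X Y : C} (e : X ≅ Y) (hX : Indecomposable X) :
    Indecomposable Y :=
  ⟨fun hY => hX.1 (hY.of_iso e), fun _ _ e' => hX.2 _ _ (e ≪≫ e')⟩

theorem isZero_biproduct {J : Type} [Fintype J] {F : J → C} (hF : ∀ j, IsZero (F j)) :
    IsZero (⨁ F) :=
  IsZero.iff_id_eq_zero _ |>.2 (biproduct.hom_ext _ _ fun j => (hF j).eq_of_tgt _ _)

noncomputable def biproductPairIsoBiprod (Y Z : C) : ⨁ pairFunction Y Z ≅ Y ⊞ Z :=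
  biprod.uniqueUpToIso _ _ ((Bicone.toBinaryBiconeIsBilimit _).symm (biproduct.isBilimit _))

theorem isSplitMono_of_comp {D : Type*} [Category D] {X Y Z : D} (f : X ⟶ Y) (g : Y ⟶ Z)
    [IsSplitMono (f ≫ g)] : IsSplitMono f :=
  ⟨⟨⟨g ≫ retraction (f ≫ g), by rw [← Category.assoc, IsSplitMono.id]⟩⟩⟩

noncomputable def isoBiprodCokernelOfIsSplitMono {X Y : C} (f : X ⟶ Y) [IsSplitMono f] :
    Y ≅ X ⊞ cokernel f :=
  biprod.uniqueUpToIso _ _ (isBilimitBinaryBiconeOfIsSplitMonoOfCokernel (cokernelIsCokernel f))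

theorem isIso_of_isSplitMono_of_indecomposable {X Y : C} (hY : Indecomposable Y)
    (hX : ¬IsZero X) (f : X ⟶ Y) [IsSplitMono f] : IsIso f := by
  have : Epi f := (hY.2 _ _ (isoBiprodCokernelOfIsSplitMono f)).elim (absurd · hX)
    (Preadditive.epi_of_isZero_cokernel f)
  exact isIso_of_mono_of_epi f

inductive IsSumOfIndec (P : C → Prop) : C → Prop
  | of_indecomposable {Y : C} : Indecomposable Y → P Y → IsSumOfIndec P Y
  | biproduct {J : Type} [Fintype J] (F : J → C) {Y : C} :
      (∀ j, IsSumOfIndec P (F j)) → (⨁ F ≅ Y) → IsSumOfIndec P Y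

namespace IsSumOfIndec

variable {P Q : C → Prop}

theorem mono {Y : C} (h : IsSumOfIndec P Y) (hPQ : ∀ M, Indecomposable M → P M → Q M) :
    IsSumOfIndec Q Y := by
  induction h with
  | of_indecomposable hY hP => exact of_indecomposable hY (hPQ _ hY hP)
  | biproduct F _ e ih => exact biproduct F ih e

theorem of_isZero {Y : C} (hY : IsZero Y) : IsSumOfIndec P Y :=
  biproduct (Empty.elim : Empty → C) (fun j => j.elim)
    ((isZero_biproduct fun j => j.elim).iso hY)

theorem isZero_or_exists_max {L : Type*} [LinearOrder L] (m : C → L) {Y : C}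
    (h : IsSumOfIndec P Y) :
    IsZero Y ∨ ∃ M, Indecomposable M ∧ P M ∧ IsSumOfIndec (fun N => m N ≤ m M) Y := by
  classical
  induction h with
  | of_indecomposable hY hP => exact .inr ⟨_, hY, hP, of_indecomposable hY le_rfl⟩
  | @biproduct J _ F Y _ e ih =>
    by_cases hzero : ∀ j, IsZero (F j)
    · exact .inl ((isZero_biproduct hzero).of_iso e.symm)
    have : Nonempty C := ⟨Y⟩
    choose! M hM using fun j (hj : ¬IsZero (F j)) => (ih j).resolve_left hj
    obtain ⟨j₀, hj₀, hmax⟩ := Finset.exists_max_image {j | ¬IsZero (F j)} (fun j => m (M j))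
      (by simpa [Finset.Nonempty] using hzero)
    obtain ⟨hM₀, hPM₀, -⟩ := hM j₀ (by simpa using hj₀)
    refine .inr ⟨M j₀, hM₀, hPM₀, biproduct F (fun j => ?_) e⟩
    by_cases hj : IsZero (F j)
    · exact of_isZero hj
    · exact (hM j hj).2.2.mono fun N _ hN => hN.trans (hmax j (by simpa using hj))

end IsSumOfIndec

section Decomposition

variable {len : C → ℕ} (hlen : ∀ Z : C, ObjLength Z (len Z))
include hlen

theorem isSumOfIndec_subobjects (W : C) : IsSumOfIndec (fun M => ∃ i : M ⟶ W, Mono i) W := by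
  induction h : len W using Nat.strong_induction_on generalizing W with
  | _ n ih =>
  by_cases hzero : IsZero W
  · exact .of_isZero hzero
  by_cases hW : Indecomposable W
  · exact .of_indecomposable hW ⟨𝟙 W, inferInstance⟩
  obtain ⟨Y, Z, e, hY, hZ⟩ : ∃ Y Z, ∃ _ : W ≅ Y ⊞ Z, ¬IsZero Y ∧ ¬IsZero Z := by
    simpa [Indecomposable, hzero] using hW
  have sub {V : C} (i : V ⟶ W) [Mono i] (hV : len V < n) :
      IsSumOfIndec (fun M => ∃ i : M ⟶ W, Mono i) V :=
    (ih _ hV V rfl).mono fun _ _ ⟨j, _⟩ => ⟨j ≫ i, inferInstance⟩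
  refine .biproduct (pairFunction Y Z) ?_ (biproductPairIsoBiprod Y Z ≪≫ e.symm)
  rintro (_ | _)
  · exact sub (V := Y) (biprod.inl ≫ e.inv) (h ▸ len_lt_of_iso_biprod hlen e hZ)
  · exact sub (V := Z) (biprod.inr ≫ e.inv)
      (h ▸ len_lt_of_iso_biprod hlen (e ≪≫ biprod.braiding Y Z) hY)

end Decomposition

section Axioms

variable {L : Type*} [LinearOrder L]

/-- The axioms (GR1), (GR2), (GR3), in this order. -/
structure SatisfiesGRAxioms (len : C → ℕ) (m : C → L) : Prop where
  le_of_mono {X Y : C} (f : X ⟶ Y) [Mono f] : Indecomposable X → Indecomposable Y → m X ≤ m Y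
  len_eq_of_eq {X Y : C} : Indecomposable X → Indecomposable Y → m X = m Y → len X = len Y
  le_of_forall_lt {X Y : C} : Indecomposable X → Indecomposable Y → len Y ≤ len X →
    (∀ t : Subobject X, t ≠ ⊤ → Indecomposable (t : C) → m t < m Y) → m X ≤ m Y

def GRMainProperty (m : C → L) (X : C) : Prop :=
  ∀ (v : L) (Y : C), IsSumOfIndec (fun M => m M ≤ v) Y → ∀ f : X ⟶ Y, Mono f →
    m X ≤ v ∧ (m X = v → IsSplitMono f)

namespace SatisfiesGRAxioms

variable {len : C → ℕ} {m : C → L} (hm : SatisfiesGRAxioms len m)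
  (hlen : ∀ Z : C, ObjLength Z (len Z)) {X : C}
  (ih : ∀ X', Indecomposable X' → len X' < len X → GRMainProperty m X')
include hm hlen ih

theorem not_mono_of_isSumOfIndec_lt (hX : Indecomposable X) {I : C}
    (hI : IsSumOfIndec (fun M => m M < m X ∧ len M ≤ len X) I) (ι : X ⟶ I) : ¬Mono ι := by
  intro hι
  rcases hI.isZero_or_exists_max m with hzero | ⟨M, hM, ⟨hlt, hlenM⟩, hImax⟩
  · exact hX.1 (hzero.of_mono ι)
  -- (GR3), applied against the summand `M` of largest measure
  obtain ⟨t, ht, htX, hMt⟩ :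
      ∃ t : Subobject X, t ≠ ⊤ ∧ Indecomposable (t : C) ∧ m M ≤ m t := by
    by_contra! h
    exact hlt.not_ge (hm.le_of_forall_lt hX hM hlenM h)
  -- by induction `t` is a direct summand of `I`, hence of `X`
  obtain ⟨htM, hsplit⟩ := ih t htX (len_lt_of_ne_top hlen ht) _ _ hImax (t.arrow ≫ ι) inferInstance
  have := hsplit (htM.antisymm hMt)
  have := isSplitMono_of_comp t.arrow ι
  exact ht ((Subobject.isIso_arrow_iff_eq_top t).1
    (isIso_of_isSplitMono_of_indecomposable hX htX.1 t.arrow))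

theorem exists_mono_comp_π (hX : Indecomposable X) {v : L} (hv : v ≤ m X) {J : Type} [Fintype J]
    {F : J → C} (hF : ∀ j, IsSumOfIndec (fun M => m M ≤ v) (F j)) (f : X ⟶ ⨁ F) [Mono f] :
    ∃ j, Mono (f ≫ biproduct.π F j) := by
  by_contra! hf
  -- `X` embeds into the sum of the images of its components, which are shorter than `X`
  let ι : X ⟶ ⨁ fun j => image (f ≫ biproduct.π F j) :=
    biproduct.lift fun j => factorThruImage _
  have : Mono ι := by
    refine mono_of_mono_fac (f := biproduct.map fun j => image.ι _) (h := f) ?_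
    ext j
    simp [ι]
  refine hm.not_mono_of_isSumOfIndec_lt hlen ih hX (.biproduct _ (fun j => ?_) (Iso.refl _)) ι this
  refine (isSumOfIndec_subobjects hlen _).mono fun M hM ⟨i, hi⟩ => ?_
  have hlenM : len M < len X :=
    (len_le_of_mono hlen i).trans_lt (len_image_lt_of_not_mono hlen _ (hf j))
  have hMv : m M ≤ v := (ih M hM hlenM v _ (hF j) (i ≫ image.ι _) inferInstance).1
  exact ⟨(hMv.trans hv).lt_of_ne fun h => hlenM.ne (hm.len_eq_of_eq hM hX h), hlenM.le⟩

theorem le_and_isSplitMono_of_le (hX : Indecomposable X) {v : L} (hv : v ≤ m X) {Y : C}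
    (hY : IsSumOfIndec (fun M => m M ≤ v) Y) (f : X ⟶ Y) [Mono f] :
    m X ≤ v ∧ IsSplitMono f := by
  induction hY with
  | of_indecomposable hY hYv =>
    have hXY := hm.le_of_mono f hX hY
    have := isIso_of_mono_of_len_eq hlen f
      (hm.len_eq_of_eq hX hY (hXY.antisymm (hYv.trans hv)))
    exact ⟨hXY.trans hYv, inferInstance⟩
  | biproduct F hF e ihF =>
    obtain ⟨j, hj⟩ := hm.exists_mono_comp_π hlen ih hX hv hF (f ≫ e.inv)
    have : Mono (f ≫ e.inv ≫ biproduct.π F j) := by simpa using hj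
    obtain ⟨hXv, hsplit⟩ := ihF j (f ≫ e.inv ≫ biproduct.π F j)
    exact ⟨hXv, isSplitMono_of_comp f (e.inv ≫ biproduct.π F j)⟩

end SatisfiesGRAxioms

theorem SatisfiesGRAxioms.grMainProperty {len : C → ℕ} {m : C → L}
    (hm : SatisfiesGRAxioms len m) (hlen : ∀ Z : C, ObjLength Z (len Z)) {X : C}
    (hX : Indecomposable X) : GRMainProperty m X := by
  induction h : len X using Nat.strong_induction_on generalizing X with
  | _ n ih' =>
  have ih : ∀ X', Indecomposable X' → len X' < len X → GRMainProperty m X' :=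
    fun X' hX' hlt => ih' _ (h ▸ hlt) hX' rfl
  intro v Y hY f _
  rcases le_total (m X) v with hXv | hvX
  · exact ⟨hXv, fun heq => (hm.le_and_isSplitMono_of_le hlen ih hX heq.ge hY f).2⟩
  · obtain ⟨hXv, hsplit⟩ := hm.le_and_isSplitMono_of_le hlen ih hX hvX hY f
    exact ⟨hXv, fun _ => hsplit⟩

end Axioms

section ChainLengths

variable {len : C → ℕ} (hlen : ∀ Z : C, ObjLength Z (len Z))
include hlen

theorem IsGRChainVal.len_mem {X : C} {S : Finset ℕ} (h : IsGRChainVal len X S) : len X ∈ S := by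
  obtain ⟨s, -, htop, -, rfl⟩ := h
  exact Finset.mem_image.2 ⟨⊤, htop, len_top hlen X⟩

theorem IsGRChainVal.le_len {X : C} {S : Finset ℕ} (h : IsGRChainVal len X S) :
    ∀ a ∈ S, a ≤ len X := by
  obtain ⟨s, -, -, -, rfl⟩ := h
  simp only [Finset.mem_image]
  rintro _ ⟨t, -, rfl⟩
  exact len_le_of_mono hlen t.arrow

theorem IsGRChainVal.insert_of_mono {A B : C} (f : A ⟶ B) [Mono f] (hB : Indecomposable B)
    {S : Finset ℕ} (h : IsGRChainVal len A S) : IsGRChainVal len B (insert (len B) S) := by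
  classical
  obtain ⟨s, hchain, -, hind, rfl⟩ := h
  refine ⟨insert ⊤ (s.image (Subobject.map f).obj), ?_, Finset.mem_insert_self _ _, ?_, ?_⟩
  · rw [Finset.coe_insert, Finset.coe_image]
    exact (hchain.image_of_map_rel _ _ _ fun _ _ h => (Subobject.map f).monotone h).insert
      fun _ _ _ => .inr le_top
  · simp only [Finset.mem_insert, Finset.mem_image]
    rintro _ (rfl | ⟨u, hu, rfl⟩)
    · exact hB.of_iso (asIso (⊤ : Subobject B).arrow).symm
    · rw [← Subobject.mk_arrow u, Subobject.map_mk]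
      exact (hind u hu).of_iso (Subobject.underlyingIso _).symm
  · rw [Finset.image_insert, Finset.image_image, len_top hlen]
    congr 1
    exact Finset.image_congr fun u _ => len_map_obj hlen f u

theorem IsGRChainVal.of_isGreatest {X : C} {s : Finset (Subobject X)}
    (hchain : IsChain (· ≤ ·) (s : Set (Subobject X)))
    (hind : ∀ u ∈ s, Indecomposable (u : C)) {t : Subobject X} (ht : IsGreatest s t) :
    IsGRChainVal len (t : C) (s.image fun u : Subobject X => len (u : C)) := by
  classical
  let e := Subobject.subobjectOrderIso t
  let g : Subobject (t : C) → Subobject X := fun Z => (e Z).1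
  have hg : Function.Injective g := fun _ _ h => e.injective (Subtype.ext h)
  have hlen_g (Z : Subobject (t : C)) : len (g Z : C) = len (Z : C) :=
    len_eq_of_iso hlen (Subobject.underlyingIso _)
  have hsurj : ∀ u ∈ s, u ∈ Set.range g := fun u hu =>
    ⟨e.symm ⟨u, ht.2 hu⟩, congrArg Subtype.val (e.apply_symm_apply _)⟩
  refine ⟨s.preimage g hg.injOn, ?_, ?_, ?_, ?_⟩
  · rw [Finset.coe_preimage]
    exact hchain.preimage _ _ g hg (fun _ _ h => e.le_iff_le.1 h)
  · rw [Finset.mem_preimage]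
    simpa [g, e.map_top] using ht.1
  · intro Z hZ
    exact (hind _ (Finset.mem_preimage.1 hZ)).of_iso (Subobject.underlyingIso (Z.arrow ≫ t.arrow))
  · have hs : (s.preimage g hg.injOn).image g = s := by
      rw [Finset.image_preimage, Finset.filter_true_of_mem hsurj]
    conv_rhs => rw [← hs, Finset.image_image]
    exact Finset.image_congr fun Z _ => (hlen_g Z).symm

end ChainLengths

namespace IsGRMeasure

variable {len : C → ℕ} {mu : C → Finset ℕ} (hmu : IsGRMeasure len mu)
  (hlen : ∀ Z : C, ObjLength Z (len Z))
include hmu hlen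

theorem lexKey_le_of_forall_lt {X Y : C} (hX : Indecomposable X) (hY : Indecomposable Y)
    (hYX : len Y ≤ len X)
    (hlt : ∀ t : Subobject X, t ≠ ⊤ → Indecomposable (t : C) → lexKey (mu t) < lexKey (mu Y)) :
    lexKey (mu X) ≤ lexKey (mu Y) := by
  classical
  obtain ⟨s, hchain, htop, hind, hval⟩ := (hmu X hX).1
  -- a chain realising `mu X` is `⊤` on top of a chain below its largest proper member
  have hsplit : mu X = insert (len X) ((s.erase ⊤).image fun u : Subobject X => len (u : C)) := by
    conv_lhs => rw [← hval, ← Finset.insert_erase htop, Finset.image_insert, len_top hlen]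
  have hchain' : IsChain (· ≤ ·) ((s.erase ⊤ : Finset _) : Set (Subobject X)) :=
    hchain.mono (Finset.coe_subset.2 (Finset.erase_subset _ _))
  have hlower : lexKey ((s.erase ⊤).image fun u : Subobject X => len (u : C)) < lexKey (mu Y) := by
    rcases (s.erase ⊤).eq_empty_or_nonempty with h0 | h0
    · rw [h0, Finset.image_empty]
      exact lexKey_empty_lt ⟨_, (hmu Y hY).1.len_mem hlen⟩
    obtain ⟨T, hTmax⟩ := hchain'.exists_isGreatest h0
    have hTs := Finset.mem_erase.1 hTmax.1
    have hval' := (hmu T (hind T hTs.2)).2 _ (IsGRChainVal.of_isGreatest hlen hchain'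
      (fun u hu => hind u (Finset.mem_of_mem_erase hu)) hTmax)
    exact (lexLE_iff_lexKey_le.1 hval').trans_lt (hlt T hTs.1 (hind T hTs.2))
  rw [hsplit]
  refine lexKey_insert_le hlower ?_ fun b hb => ((hmu Y hY).1.le_len hlen b hb).trans hYX
  simp only [Finset.mem_image]
  rintro _ ⟨u, hu, rfl⟩
  exact len_lt_of_ne_top hlen (Finset.mem_erase.1 hu).1

theorem satisfiesGRAxioms : SatisfiesGRAxioms len fun X => lexKey (mu X) where
  le_of_mono f _ hX hY := (lexKey_le_of_subset (Finset.subset_insert _ _)).trans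
    (lexLE_iff_lexKey_le.1 ((hmu _ hY).2 _ ((hmu _ hX).1.insert_of_mono hlen f hY)))
  len_eq_of_eq {X Y} hX hY h := by
    have hXY : mu X = mu Y := lexKey_injective h
    exact ((hmu Y hY).1.le_len hlen _ (hXY ▸ (hmu X hX).1.len_mem hlen)).antisymm
      ((hmu X hX).1.le_len hlen _ (hXY ▸ (hmu Y hY).1.len_mem hlen))
  le_of_forall_lt hX hY hYX hlt := hmu.lexKey_le_of_forall_lt hlen hX hY hYX hlt

end IsGRMeasure

/-- (GR8), Gabriel's main property: if `X` is indecomposable and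
`X ⊆ Y = Y₁ ⊕ ... ⊕ Yᵣ` with all `Yᵢ` indecomposable, then
`μ(X) ≤ max_i μ(Yᵢ)`; moreover if `μ(X) = max_i μ(Yᵢ)` then `X` is a
direct summand of `Y`. -/
theorem grMeasure_main_property
    (len : C → ℕ) (hlen : ∀ Z : C, ObjLength Z (len Z))
    (mu : C → Finset ℕ) (hmu : IsGRMeasure len mu)
    (X : C) (hX : Indecomposable X)
    (r : ℕ) (Ys : Fin r → C) (hYs : ∀ i, Indecomposable (Ys i))
    (f : X ⟶ ⨁ Ys) (hf : Mono f)
    (k : Fin r) (hk : ∀ i, lexLE (mu (Ys i)) (mu (Ys k))) :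
    lexLE (mu X) (mu (Ys k)) ∧
    (mu X = mu (Ys k) → ∃ Z : C, Nonempty ((⨁ Ys) ≅ X ⊞ Z)) := by
  have hsum : IsSumOfIndec (fun M => lexKey (mu M) ≤ lexKey (mu (Ys k))) (⨁ Ys) :=
    .biproduct Ys (fun i => .of_indecomposable (hYs i) (lexLE_iff_lexKey_le.1 (hk i))) (Iso.refl _)
  obtain ⟨hle, hsplit⟩ :=
    (hmu.satisfiesGRAxioms hlen).grMainProperty hlen hX _ _ hsum f hf
  refine ⟨lexLE_iff_lexKey_le.2 hle, fun h => ?_⟩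
  have := hsplit (congrArg lexKey h)
  exact ⟨_, ⟨isoBiprodCokernelOfIsSplitMono f⟩⟩
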